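/- Let G be a finite simple graph containing no subgraph isomorphic to the complete graph K₅ and no subgraph isomorphic to the complete bipartite graph K_{3,3} (in particular, any planar graph). If B = {N[v] : v ∈ V(G)}, then NCTD(B) ≤ 5. -/

import Mathlib

/-- The closed neighborhood `N[v]` of a vertex `v` in a graph `G`. -/
def cN {V : Type*} (G : SimpleGraph V) (v : V) : Set V :=
  insert v {u | G.Adj v u}

/-- A vertex `w` distinguishes `N[u]` and `N[v]` if it lies in exactly one of them. -/
def Distinguishes {V : Type*} (G : SimpleGraph V) (w u v : V) : Prop :=
  Xor' (w ∈ cN G u) (w ∈ cN G v)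

/-- `T` is a non-clashing teaching map for the family `B` of closed neighborhoods of `G`. -/
def IsNCTM {V : Type*} (G : SimpleGraph V) (B : Set (Set V)) (T : Set V → Set V) : Prop :=
  ∀ u v : V, cN G u ∈ B → cN G v ∈ B → cN G u ≠ cN G v →
    ∃ w ∈ T (cN G u) ∪ T (cN G v), Distinguishes G w u v

/-- `G` contains a subgraph isomorphic to `K_5`: five distinct pairwise adjacent
vertices. -/
def HasK5 {V : Type*} (G : SimpleGraph V) : Prop :=
  ∃ a : Fin 5 → V,
    Function.Injective a ∧ ∀ i j : Fin 5, i ≠ j → G.Adj (a i) (a j)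

/-- `G` contains a subgraph isomorphic to `K_{3,3}`: six distinct vertices
`a 0, a 1, a 2, b 0, b 1, b 2` with every `a i` adjacent to every `b j`. -/
def HasK33 {V : Type*} (G : SimpleGraph V) : Prop :=
  ∃ a b : Fin 3 → V,
    Function.Injective (Sum.elim a b) ∧ ∀ i j : Fin 3, G.Adj (a i) (b j)

lemma mem_cN {V : Type*} (G : SimpleGraph V) (v x : V) :
    x ∈ cN G v ↔ x = v ∨ G.Adj v x := by simp [cN]

lemma key_lemma {V : Type*} [Fintype V] (G : SimpleGraph V) (hK33 : ¬ HasK33 G) (b : V) :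
    ∃ H : Finset V, H.card ≤ 4 ∧
      ∀ a, G.Adj b a → (∃ x, G.Adj b x ∧ x ∉ cN G a) →
        ∃ h ∈ H, G.Adj b h ∧ h ∉ cN G a := by
  classical
  by_cases hU : ∃ a0, G.Adj b a0 ∧ ∃ x, G.Adj b x ∧ x ∉ cN G a0
  · obtain ⟨a0, hba0, x0, hbx0, hx0⟩ := hU
    have hx0ne : x0 ≠ a0 := fun h => hx0 (by simp [cN, h])
    have hx0na : ¬ G.Adj a0 x0 := fun h => hx0 (by simp [cN, h])
    set Cf : Finset V :=
      Finset.univ.filter (fun c => G.Adj b c ∧ G.Adj a0 c ∧ G.Adj x0 c) with hCf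
    have hCmem : ∀ c ∈ Cf, G.Adj b c ∧ G.Adj a0 c ∧ G.Adj x0 c := by
      intro c hc; simpa [hCf] using hc
    have hCcard : Cf.card ≤ 2 := by
      by_contra hlt
      push_neg at hlt
      rw [Finset.two_lt_card_iff] at hlt
      obtain ⟨c1, c2, c3, hc1, hc2, hc3, h12, h13, h23⟩ := hlt
      obtain ⟨hb1, ha1, hx1⟩ := hCmem c1 hc1
      obtain ⟨hb2, ha2, hx2⟩ := hCmem c2 hc2
      obtain ⟨hb3, ha3, hx3⟩ := hCmem c3 hc3
      apply hK33
      refine ⟨![b, a0, x0], ![c1, c2, c3], ?_, ?_⟩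
      · apply Function.Injective.sumElim
        · intro i j h
          fin_cases i <;> fin_cases j <;>
            simp_all [hba0.ne', hbx0.ne', hx0ne, hba0.ne, hbx0.ne, hx0ne.symm]
        · intro i j h
          fin_cases i <;> fin_cases j <;> simp_all [h12, h13, h23]
        · intro i j
          fin_cases i <;> fin_cases j <;>
            simp only [Matrix.cons_val_zero, Matrix.cons_val_one, Matrix.head_cons,
              Matrix.cons_val_two, Matrix.tail_cons, Matrix.cons_val_fin_one] <;>
            first
              | exact hb1.ne | exact hb2.ne | exact hb3.ne
              | exact ha1.ne | exact ha2.ne | exact ha3.ne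
              | exact hx1.ne | exact hx2.ne | exact hx3.ne
      · intro i j
        fin_cases i <;> fin_cases j <;> assumption
    set f : V → V := fun c =>
      if h : ∃ x, G.Adj b x ∧ x ∉ cN G c then h.choose else c with hfdef
    refine ⟨insert a0 (insert x0 (Cf.image f)), ?_, ?_⟩
    · have h1 := Finset.card_insert_le a0 (insert x0 (Cf.image f))
      have h2 := Finset.card_insert_le x0 (Cf.image f)
      have h3 := Finset.card_image_le (s := Cf) (f := f)
      omega
    · intro a hba hex
      by_cases ha0 : a0 ∉ cN G a
      · exact ⟨a0, by simp, hba0, ha0⟩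
      by_cases hx0' : x0 ∉ cN G a
      · exact ⟨x0, by simp, hbx0, hx0'⟩
      push_neg at ha0 hx0'
      rw [mem_cN] at ha0 hx0'
      have hane : a ≠ a0 := by
        rintro rfl
        rcases hx0' with h | h
        · exact hx0ne h
        · exact hx0na h
      have hanx : a ≠ x0 := by
        rintro rfl
        rcases ha0 with h | h
        · exact hx0ne h.symm
        · exact hx0na (G.adj_symm h)
      have haa0 : G.Adj a0 a := by
        rcases ha0 with h | h
        · exact absurd h.symm hane
        · exact G.adj_symm h
      have hax0 : G.Adj x0 a := by
        rcases hx0' with h | h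
        · exact absurd h.symm hanx
        · exact G.adj_symm h
      have haC : a ∈ Cf := by simp [hCf, hba, haa0, hax0]
      have hfa : f a = hex.choose := dif_pos hex
      have hspec := hex.choose_spec
      refine ⟨f a, ?_, ?_, ?_⟩
      · exact Finset.mem_insert_of_mem
          (Finset.mem_insert_of_mem (Finset.mem_image_of_mem f haC))
      · rw [hfa]; exact hspec.1
      · rw [hfa]; exact hspec.2
  · refine ⟨∅, by simp, fun a hba hex => ?_⟩
    exact absurd ⟨a, hba, hex⟩ hU

/-- If `G` has no subgraph isomorphic to `K_5` and none isomorphic to `K_{3,3}` (in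
particular, if `G` is planar) and `B = {N[v] : v ∈ V(G)}`, then `NCTD(B) ≤ 5`: there is a
non-clashing teaching map of size at most `5` for `B`. -/
theorem stmt13 {V : Type*} [Fintype V] (G : SimpleGraph V)
    (hK5 : ¬ HasK5 G) (hK33 : ¬ HasK33 G) :
    ∃ T : Set V → Set V,
      IsNCTM G {S : Set V | ∃ v : V, S = cN G v} T ∧
      ∀ S ∈ {S : Set V | ∃ v : V, S = cN G v}, (T S).ncard ≤ 5 := by
  classical
  choose Hf hcard hspec using fun b => key_lemma G hK33 b
  refine ⟨fun S => if h : ∃ v : V, S = cN G v then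
      insert h.choose (↑(Hf h.choose) : Set V) else ∅, ?_, ?_⟩
  · intro u v hu hv hne
    have h1 : ∃ w : V, cN G u = cN G w := hu
    have h2 : ∃ w : V, cN G v = cN G w := hv
    simp only [dif_pos h1, dif_pos h2]
    set a := h1.choose with hadef
    have ha : cN G u = cN G a := h1.choose_spec
    set b := h2.choose with hbdef
    have hb : cN G v = cN G b := h2.choose_spec
    have hab : cN G a ≠ cN G b := by rw [← ha, ← hb]; exact hne
    have hself : ∀ w : V, w ∈ cN G w := fun w => by simp [cN]
    by_cases hacb : a ∈ cN G b
    · by_cases hbca : b ∈ cN G a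
      · -- both in: a ≠ b and adjacent
        have hne' : a ≠ b := fun h => hab (by rw [h])
        have hAdjba : G.Adj b a := by
          rcases (mem_cN G b a).1 hacb with h | h
          · exact absurd h hne'
          · exact h
        have hAdjab : G.Adj a b := G.adj_symm hAdjba
        by_cases hsub : cN G a ⊆ cN G b
        · -- find x ∈ cN b \ cN a
          have : ¬ cN G b ⊆ cN G a := fun h => hab (Set.Subset.antisymm hsub h)
          obtain ⟨x, hxb, hxa⟩ := Set.not_subset.1 this
          have hxneb : x ≠ b := fun h => hxa (h ▸ hbca)
          have hAdjbx : G.Adj b x := by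
            rcases (mem_cN G b x).1 hxb with h | h
            · exact absurd h hxneb
            · exact h
          obtain ⟨w, hwH, hAdjbw, hwna⟩ := hspec b a hAdjba ⟨x, hAdjbx, hxa⟩
          refine ⟨w, Or.inr (Set.mem_insert_of_mem _ (by exact_mod_cast hwH)), ?_⟩
          rw [Distinguishes, ha, hb]
          exact Or.inr ⟨(mem_cN G b w).2 (Or.inr hAdjbw), hwna⟩
        · obtain ⟨x, hxa, hxb⟩ := Set.not_subset.1 hsub
          have hxnea : x ≠ a := fun h => hxb (h ▸ hacb)
          have hAdjax : G.Adj a x := by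
            rcases (mem_cN G a x).1 hxa with h | h
            · exact absurd h hxnea
            · exact h
          obtain ⟨w, hwH, hAdjaw, hwnb⟩ := hspec a b hAdjab ⟨x, hAdjax, hxb⟩
          refine ⟨w, Or.inl (Set.mem_insert_of_mem _ (by exact_mod_cast hwH)), ?_⟩
          rw [Distinguishes, ha, hb]
          exact Or.inl ⟨(mem_cN G a w).2 (Or.inr hAdjaw), hwnb⟩
      · refine ⟨b, Or.inr (Set.mem_insert _ _), ?_⟩
        rw [Distinguishes, ha, hb]
        exact Or.inr ⟨hself b, hbca⟩
    · refine ⟨a, Or.inl (Set.mem_insert _ _), ?_⟩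
      rw [Distinguishes, ha, hb]
      exact Or.inl ⟨hself a, hacb⟩
  · intro S hS
    have hS' : ∃ v : V, S = cN G v := hS
    simp only [dif_pos hS']
    have h1 := Set.ncard_insert_le hS'.choose (↑(Hf hS'.choose) : Set V)
    have h2 : (↑(Hf hS'.choose) : Set V).ncard = (Hf hS'.choose).card :=
      Set.ncard_coe_finset _
    have := hcard hS'.choose
    omega
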